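/- Let h : ℕ₊ × ℕ₊ → ℝ (arguments written (k, c)) be describable, i.e., there exists a finite set F of good real polynomials in the two variables k, c such that for all k, c ∈ ℕ₊ there exists p ∈ F with p(k, c) = h(k, c). Then for every ε > 0 there exist k, c ∈ ℕ₊ such that |h(k, c) − kc/(k+1)| > ε. In particular, h does not uniformly approximate (k, c) ↦ kc/(k+1). -/

import Mathlib

open MvPolynomial

/-- A two-variable real polynomial (variable `0` = k, variable `1` = c) is *good* if
every monomial with positive degree in `c` also has positive degree in `k`. -/
def GoodPoly (p : MvPolynomial (Fin 2) ℝ) : Prop :=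
  ∀ m ∈ p.support, 0 < m 1 → 0 < m 0

/-!
For a fixed `k`, each `p ∈ F` is a polynomial in `c` whose coefficient of `c` is `r(k)` for a
polynomial `r`. The equation `(k + 1) r(k) = k` has only finitely many solutions, since at
`k = -1` the two sides differ by `1`. For any other `k`, every `p(k, c) - kc/(k+1)` is a
nonconstant polynomial in `c`, so for large `c` all of them exceed `ε` in absolute value.
-/

open Polynomial Filter
open scoped Polynomial.Bivariate

namespace Polynomial

theorem eventually_eval_natCast_ne_div_add_one (r : ℝ[X]) :
    ∀ᶠ k : ℕ in atTop, r.eval (k : ℝ) ≠ k / (k + 1) := by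
  have hs : (X + 1) * r - X ≠ 0 := fun h => by simpa using congrArg (eval (-1)) h
  have hroots : {k : ℕ | ((X + 1) * r - X).IsRoot (k : ℝ)}.Finite :=
    (finite_setOfPred_isRoot hs).preimage Nat.cast_injective.injOn
  rw [← Nat.cofinite_eq_atTop]
  filter_upwards [hroots.eventually_cofinite_notMem] with k hk heq
  refine hk ?_
  have hk1 : (k : ℝ) + 1 ≠ 0 := by positivity
  simp only [IsRoot, eval_sub, eval_mul, eval_add, eval_X, eval_one, heq]
  field_simp
  ring

theorem tendsto_abs_eval_sub_mul_atTop {f : ℝ[X]} {m : ℝ} (hf : f.coeff 1 ≠ m) :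
    Tendsto (fun x => |f.eval x - m * x|) atTop atTop := by
  have hcoeff : (f - C m * X).coeff 1 ≠ 0 := by
    simpa [sub_eq_zero] using hf
  have hdeg : 0 < (f - C m * X).degree :=
    lt_of_lt_of_le (by norm_num) (le_degree_of_ne_zero hcoeff)
  simpa using abs_tendsto_atTop _ hdeg

namespace Bivariate

variable {R : Type*} [CommSemiring R]

theorem evalEval_equivMvPolynomial_symm (x y : R) (p : MvPolynomial (Fin 2) R) :
    ((equivMvPolynomial R).symm p).evalEval x y = MvPolynomial.eval ![x, y] p := by
  have hcomp : (aevalAeval x y).comp (equivMvPolynomial R).symm.toAlgHom =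
      MvPolynomial.aeval ![x, y] := by
    ext i
    fin_cases i <;> simp
  rw [← coe_aevalAeval_eq_evalEval, ← MvPolynomial.coe_aeval_eq_eval, ← hcomp]
  rfl

end Bivariate

end Polynomial

theorem tendsto_abs_evalEval_natCast_sub_atTop {q : ℝ[X][Y]} {a : ℝ}
    (hq : (q.coeff 1).eval a ≠ a / (a + 1)) :
    Tendsto (fun c : ℕ => |q.evalEval a c - a * c / (a + 1)|) atTop atTop := by
  have hcoeff : (q.map (evalRingHom a)).coeff 1 ≠ a / (a + 1) := by
    simpa [Polynomial.coeff_map] using hq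
  refine ((tendsto_abs_eval_sub_mul_atTop hcoeff).comp tendsto_natCast_atTop_atTop).congr
    fun c => ?_
  simp only [Function.comp_apply, map_evalRingHom_eval, mul_div_right_comm]

theorem describable_not_approx_kc_div_general (h : ℕ → ℕ → ℝ)
    (F : Finset (MvPolynomial (Fin 2) ℝ))
    (hdesc : ∀ k c : ℕ, 0 < k → 0 < c →
      ∃ p ∈ F, eval ![(k : ℝ), (c : ℝ)] p = h k c) :
    ∀ ε : ℝ, 0 < ε → ∃ k c : ℕ, 0 < k ∧ 0 < c ∧
      |h k c - (k : ℝ) * (c : ℝ) / ((k : ℝ) + 1)| > ε := by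
  intro ε _
  let q : MvPolynomial (Fin 2) ℝ → ℝ[X][Y] := (Bivariate.equivMvPolynomial ℝ).symm
  obtain ⟨k, hk, hk0⟩ : ∃ k : ℕ, (∀ p ∈ F, ((q p).coeff 1).eval (k : ℝ) ≠ k / (k + 1)) ∧ 0 < k :=
    ((eventually_all_finset F).2 fun p _ => eventually_eval_natCast_ne_div_add_one _).and
      (eventually_gt_atTop 0) |>.exists
  obtain ⟨c, hc, hc0⟩ : ∃ c : ℕ,
      (∀ p ∈ F, ε < |(q p).evalEval (k : ℝ) c - k * c / (k + 1)|) ∧ 0 < c :=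
    ((eventually_all_finset F).2 fun p hp =>
      (tendsto_abs_evalEval_natCast_sub_atTop (hk p hp)).eventually_gt_atTop ε).and
      (eventually_gt_atTop 0) |>.exists
  obtain ⟨p, hp, hpkc⟩ := hdesc k c hk0 hc0
  refine ⟨k, c, hk0, hc0, ?_⟩
  simpa only [q, Bivariate.evalEval_equivMvPolynomial_symm, hpkc] using hc p hp

/-- If `h : ℕ₊ × ℕ₊ → ℝ` is describable, i.e. weakly-described by a finite set of good
polynomials in `k, c`, then `h` does not uniformly approximate `(k, c) ↦ kc/(k+1)`. -/
theorem describable_not_approx_kc_div (h : ℕ → ℕ → ℝ)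
    (F : Finset (MvPolynomial (Fin 2) ℝ))
    (hgood : ∀ p ∈ F, GoodPoly p)
    (hdesc : ∀ k c : ℕ, 0 < k → 0 < c →
      ∃ p ∈ F, eval ![(k : ℝ), (c : ℝ)] p = h k c) :
    ∀ ε : ℝ, 0 < ε → ∃ k c : ℕ, 0 < k ∧ 0 < c ∧
      |h k c - (k : ℝ) * (c : ℝ) / ((k : ℝ) + 1)| > ε :=
  describable_not_approx_kc_div_general h F hdesc
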